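/- For z ∈ ℂ let R_z be the bounded linear operator on L²((0,1), ℂ) defined by (R_z f)(x) = ∫_x^1 e^{z(x−s)} f(s) ds. Then the operator norm ‖R_z‖ depends only on Re z, and writing z₁ = Re z: (i) if z₁ > −1, then ‖R_z‖ = sin ν / ν = (z₁² + ν²)^{−1/2}, where ν ∈ (0, π) is the unique solution of −ν cot ν = z₁; (ii) if z₁ = −1, then ‖R_z‖ = 1; (iii) if z₁ < −1, then ‖R_z‖ = sinh η / η = (z₁² − η²)^{−1/2}, where η ∈ (0, +∞) is the unique solution of −η coth η = z₁. -/

import Mathlib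

open MeasureTheory Set

/-- Lebesgue measure restricted to the interval `(0,1)`. -/
noncomputable def mu01 : Measure ℝ := volume.restrict (Set.Ioo 0 1)

/-- `R` is the family of resolvent-type operators
`(R_z f)(x) = ∫_x^1 e^{z(x−s)} f(s) ds` on `L²((0,1), ℂ)`. -/
def IsResolventFamily (R : ℂ → (Lp ℂ 2 mu01 →L[ℂ] Lp ℂ 2 mu01)) : Prop :=
  ∀ z : ℂ, ∀ f : Lp ℂ 2 mu01, ∀ᵐ x ∂mu01,
    (R z f : ℝ → ℂ) x = ∫ s in Set.Ioo x 1, Complex.exp (z * ((x : ℂ) - (s : ℂ))) * f s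

open scoped ENNReal

/-! The operator `R_z` is dominated by the positive kernel `K(x,s) = 1_{x<s} e^{Re z (x-s)}`.
For the positive eigenfunction `φ` of the Robin problem (`sin (ν s)`, `s` or `sinh (η s)`) one has
`∫ K(x,s) φ(s) ds = κ φ(1-x)`, and since `K(1-s, 1-x) = K(x,s)` also `∫ K(x,s) φ(1-x) dx = κ φ(s)`;
the Schur test then gives `‖R_z‖ ≤ κ`. Conversely `R_z` maps `e^{i Im z s} φ(s)` to
`e^{i Im z x} κ φ(1-x)`, which has norm `κ ‖φ‖` because `x ↦ 1-x` preserves the measure,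
so `‖R_z‖ = κ`. Such a `φ` exists for every value of `Re z` by the intermediate value theorem,
hence `‖R_z‖` depends only on `Re z`. -/

section Schur

variable {α : Type*} [MeasurableSpace α] {μ : Measure α}

theorem ENNReal.sq_lintegral_mul_le {f g : α → ℝ≥0∞} (hf : AEMeasurable f μ)
    (hg : AEMeasurable g μ) :
    (∫⁻ a, f a * g a ∂μ) ^ 2 ≤ (∫⁻ a, f a ^ 2 ∂μ) * ∫⁻ a, g a ^ 2 ∂μ := by
  have hCS := ENNReal.lintegral_mul_le_Lp_mul_Lq μ Real.HolderConjugate.two_two hf hg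
  simp only [Pi.mul_apply, ENNReal.rpow_two] at hCS
  calc (∫⁻ a, f a * g a ∂μ) ^ 2
      ≤ ((∫⁻ a, f a ^ 2 ∂μ) ^ (1 / 2 : ℝ) * (∫⁻ a, g a ^ 2 ∂μ) ^ (1 / 2 : ℝ)) ^ 2 :=
        pow_le_pow_left' hCS 2
    _ = (∫⁻ a, f a ^ 2 ∂μ) * ∫⁻ a, g a ^ 2 ∂μ := by
        simp only [mul_pow, ← ENNReal.rpow_natCast, ← ENNReal.rpow_mul]
        norm_num

theorem ENNReal.sq_lintegral_mul_le_mul_lintegral_div {w p g : α → ℝ≥0∞}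
    (hw : AEMeasurable w μ) (hp : AEMeasurable p μ) (hg : AEMeasurable g μ)
    (hp0 : ∀ᵐ a ∂μ, p a ≠ 0) (hp_top : ∀ᵐ a ∂μ, p a ≠ ∞) :
    (∫⁻ a, w a * g a ∂μ) ^ 2 ≤ (∫⁻ a, w a * p a ∂μ) * ∫⁻ a, w a * (g a ^ 2 / p a) ∂μ := by
  have sq_sqrt (x : ℝ≥0∞) : (x ^ (1 / 2 : ℝ)) ^ 2 = x := by
    rw [← ENNReal.rpow_natCast, ← ENNReal.rpow_mul]; norm_num
  have sqrt_sq (x : ℝ≥0∞) : (x ^ 2) ^ (1 / 2 : ℝ) = x := by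
    rw [← ENNReal.rpow_natCast, ← ENNReal.rpow_mul]; norm_num
  have hsplit : ∀ᵐ a ∂μ, w a * g a =
      (w a * p a) ^ (1 / 2 : ℝ) * (w a * (g a ^ 2 / p a)) ^ (1 / 2 : ℝ) := by
    filter_upwards [hp0, hp_top] with a ha0 ha_top
    have hprod : w a * p a * (w a * (g a ^ 2 / p a)) = (w a * g a) ^ 2 := by
      rw [mul_mul_mul_comm, ENNReal.mul_div_cancel ha0 ha_top]; ring
    rw [← ENNReal.mul_rpow_of_nonneg _ _ (by norm_num), hprod, sqrt_sq]
  calc (∫⁻ a, w a * g a ∂μ) ^ 2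
      = (∫⁻ a, (w a * p a) ^ (1 / 2 : ℝ) * (w a * (g a ^ 2 / p a)) ^ (1 / 2 : ℝ) ∂μ) ^ 2 := by
        rw [lintegral_congr_ae hsplit]
    _ ≤ _ := ENNReal.sq_lintegral_mul_le (by fun_prop) (by fun_prop)
    _ = (∫⁻ a, w a * p a ∂μ) * ∫⁻ a, w a * (g a ^ 2 / p a) ∂μ := by
        simp only [sq_sqrt]

variable {β : Type*} [MeasurableSpace β] {ν : Measure β}

theorem lintegral_sq_lintegral_mul_le_of_schur [SFinite μ] [SFinite ν] {K : α → β → ℝ≥0∞}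
    (hK : Measurable (Function.uncurry K)) {p : β → ℝ≥0∞} {q : α → ℝ≥0∞} (hp : Measurable p)
    (hq : Measurable q) (hp0 : ∀ᵐ y ∂ν, p y ≠ 0) (hp_top : ∀ᵐ y ∂ν, p y ≠ ∞) {a b : ℝ≥0∞}
    (hKp : ∀ᵐ x ∂μ, ∫⁻ y, K x y * p y ∂ν ≤ a * q x)
    (hKq : ∀ᵐ y ∂ν, ∫⁻ x, K x y * q x ∂μ ≤ b * p y) {g : β → ℝ≥0∞} (hg : AEMeasurable g ν) :
    ∫⁻ x, (∫⁻ y, K x y * g y ∂ν) ^ 2 ∂μ ≤ a * b * ∫⁻ y, g y ^ 2 ∂ν := by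
  set h : β → ℝ≥0∞ := fun y => g y ^ 2 / p y
  have hh : AEMeasurable h ν := (hg.pow_const 2).div hp.aemeasurable
  have hKh : AEMeasurable (Function.uncurry fun x y => q x * (K x y * h y)) (μ.prod ν) :=
    (hq.comp measurable_fst).aemeasurable.mul (hK.aemeasurable.mul hh.comp_snd)
  calc ∫⁻ x, (∫⁻ y, K x y * g y ∂ν) ^ 2 ∂μ
      ≤ ∫⁻ x, a * (q x * ∫⁻ y, K x y * h y ∂ν) ∂μ := by
        refine lintegral_mono_ae ?_
        filter_upwards [hKp] with x hx
        rw [← mul_assoc]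
        exact (ENNReal.sq_lintegral_mul_le_mul_lintegral_div hK.of_uncurry_left.aemeasurable
          hp.aemeasurable hg hp0 hp_top).trans (by gcongr)
    _ = a * ∫⁻ x, ∫⁻ y, q x * (K x y * h y) ∂ν ∂μ := by
        have hKh' : AEMeasurable (Function.uncurry fun x y => K x y * h y) (μ.prod ν) :=
          hK.aemeasurable.mul hh.comp_snd
        rw [lintegral_const_mul'' a (f := fun x => q x * ∫⁻ y, K x y * h y ∂ν)
          (hq.aemeasurable.mul hKh'.lintegral_prod_right')]
        refine congrArg _ (lintegral_congr fun x => ?_)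
        exact (lintegral_const_mul'' (q x) (hK.of_uncurry_left.aemeasurable.mul hh)).symm
    _ = a * ∫⁻ y, h y * ∫⁻ x, K x y * q x ∂μ ∂ν := by
        rw [lintegral_lintegral_swap hKh]
        congr 1
        refine lintegral_congr fun y => ?_
        rw [← lintegral_const_mul'' (h y) (f := fun x => K x y * q x)
          (hK.of_uncurry_right.aemeasurable.mul hq.aemeasurable)]
        congr 1; ext x; ring
    _ ≤ a * ∫⁻ y, h y * (b * p y) ∂ν := by
        gcongr 1
        exact lintegral_mono_ae (hKq.mono fun y hy => by gcongr)
    _ = a * ∫⁻ y, b * g y ^ 2 ∂ν := by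
        congr 1
        refine lintegral_congr_ae ?_
        filter_upwards [hp0, hp_top] with y hy0 hy_top
        rw [mul_left_comm, ENNReal.div_mul_cancel hy0 hy_top]
    _ = a * b * ∫⁻ y, g y ^ 2 ∂ν := by
        rw [lintegral_const_mul'' _ (hg.pow_const 2), mul_assoc]

end Schur

theorem eLpNorm_two_sq {α E : Type*} [MeasurableSpace α] {μ : Measure α} [ENorm E]
    (f : α → E) : eLpNorm f 2 μ ^ 2 = ∫⁻ x, ‖f x‖ₑ ^ 2 ∂μ := by
  simpa using eLpNorm_nnreal_pow_eq_lintegral (f := f) (μ := μ) (p := 2) two_ne_zero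

theorem integral_exp_mul_eq_of_hasDerivAt {φ φ' : ℝ → ℝ} {c k : ℝ}
    (hφ : ∀ s, HasDerivAt φ (φ' s) s) (hφ' : ∀ s, HasDerivAt φ' (-k * φ s) s)
    (hck : c ^ 2 + k ≠ 0) (hrobin : φ' 1 + c * φ 1 = 0) (x : ℝ) :
    ∫ s in x..1, Real.exp (c * (x - s)) * φ s = (c * φ x + φ' x) / (c ^ 2 + k) := by
  have hF : ∀ s ∈ uIcc x 1, HasDerivAt
      (fun s => -(Real.exp (c * (x - s)) * (c * φ s + φ' s)) / (c ^ 2 + k))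
      (Real.exp (c * (x - s)) * φ s) s := by
    intro s _
    have hexp : HasDerivAt (fun s => Real.exp (c * (x - s))) (Real.exp (c * (x - s)) * -c) s := by
      simpa using (((hasDerivAt_id s).const_sub x).const_mul c).exp
    refine ((hexp.mul (((hφ s).const_mul c).add (hφ' s))).neg.div_const (c ^ 2 + k)).congr_deriv ?_
    simp only [Pi.add_apply]
    field_simp
    ring
  have hφ_cont : Continuous φ := continuous_iff_continuousAt.2 fun s => (hφ s).continuousAt
  have hint : Continuous fun s => Real.exp (c * (x - s)) * φ s := by fun_prop
  rw [intervalIntegral.integral_eq_sub_of_hasDerivAt hF (hint.intervalIntegrable x 1),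
    add_comm (c * φ 1), hrobin]
  simp only [sub_self, mul_zero, Real.exp_zero, one_mul, neg_zero, zero_div]
  ring

theorem sq_add_sq_eq_of_mul_cos_add_mul_sin_eq_zero {c ν : ℝ} (hsin : Real.sin ν ≠ 0)
    (hrel : ν * Real.cos ν + c * Real.sin ν = 0) : c ^ 2 + ν ^ 2 = (ν / Real.sin ν) ^ 2 := by
  have hc : c = -(ν * Real.cos ν) / Real.sin ν := by field_simp; linarith
  rw [hc]
  field_simp
  linear_combination ν ^ 2 * Real.sin_sq_add_cos_sq ν

theorem sq_sub_sq_eq_of_mul_cosh_add_mul_sinh_eq_zero {c η : ℝ} (hη : η ≠ 0)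
    (hrel : η * Real.cosh η + c * Real.sinh η = 0) : c ^ 2 - η ^ 2 = (η / Real.sinh η) ^ 2 := by
  have hsinh : Real.sinh η ≠ 0 := Real.sinh_ne_zero.2 hη
  have hc : c = -(η * Real.cosh η) / Real.sinh η := by field_simp; linarith
  rw [hc]
  field_simp
  linear_combination Real.cosh_sq_sub_sinh_sq η

theorem integral_exp_mul_sin_eq {c ν : ℝ} (hν : ν ∈ Ioo 0 Real.pi)
    (hrel : ν * Real.cos ν + c * Real.sin ν = 0) (x : ℝ) :
    ∫ s in x..1, Real.exp (c * (x - s)) * Real.sin (ν * s) =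
      Real.sin ν / ν * Real.sin (ν * (1 - x)) := by
  have hsin : Real.sin ν ≠ 0 := (Real.sin_pos_of_pos_of_lt_pi hν.1 hν.2).ne'
  have hν0 : ν ≠ 0 := hν.1.ne'
  have hck := sq_add_sq_eq_of_mul_cos_add_mul_sin_eq_zero hsin hrel
  have hc : c = -(ν * Real.cos ν) / Real.sin ν := by field_simp; linarith
  rw [integral_exp_mul_eq_of_hasDerivAt (φ' := fun s => ν * Real.cos (ν * s)) (k := ν ^ 2)
    (fun s => by simpa [mul_comm] using ((hasDerivAt_id' s).const_mul ν).sin)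
    (fun s => by simpa [mul_comm] using
      (((hasDerivAt_id' s).const_mul ν).cos.const_mul ν).congr_deriv (by ring))
    (by rw [hck]; positivity) (by simpa [mul_comm] using hrel),
    hck, hc, mul_sub, mul_one, Real.sin_sub]
  field_simp
  ring

theorem integral_exp_mul_sinh_eq {c η : ℝ} (hη : 0 < η)
    (hrel : η * Real.cosh η + c * Real.sinh η = 0) (x : ℝ) :
    ∫ s in x..1, Real.exp (c * (x - s)) * Real.sinh (η * s) =
      Real.sinh η / η * Real.sinh (η * (1 - x)) := by
  have hsinh : Real.sinh η ≠ 0 := (Real.sinh_pos_iff.2 hη).ne'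
  have hη0 : η ≠ 0 := hη.ne'
  have hck := sq_sub_sq_eq_of_mul_cosh_add_mul_sinh_eq_zero hη0 hrel
  rw [sub_eq_add_neg] at hck
  have hc : c = -(η * Real.cosh η) / Real.sinh η := by field_simp; linarith
  rw [integral_exp_mul_eq_of_hasDerivAt (φ' := fun s => η * Real.cosh (η * s)) (k := -η ^ 2)
    (fun s => by simpa [mul_comm] using ((hasDerivAt_id' s).const_mul η).sinh)
    (fun s => by simpa [mul_comm] using
      (((hasDerivAt_id' s).const_mul η).cosh.const_mul η).congr_deriv (by ring))
    (by rw [hck]; positivity) (by simpa [mul_comm] using hrel),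
    hck, hc, mul_sub, mul_one, Real.sinh_sub]
  field_simp
  ring

theorem integral_exp_neg_mul_eq (x : ℝ) :
    ∫ s in x..1, Real.exp (-1 * (x - s)) * s = 1 * (1 - x) := by
  rw [integral_exp_mul_eq_of_hasDerivAt (φ' := fun _ => 1) (k := 0) hasDerivAt_id'
    (fun _ => by simpa using hasDerivAt_const _ (1 : ℝ)) (by norm_num) (by norm_num)]
  ring

theorem exists_mem_Ioo_mul_cos_add_mul_sin_eq_zero {c : ℝ} (hc : -1 < c) :
    ∃ ν ∈ Ioo 0 Real.pi, ν * Real.cos ν + c * Real.sin ν = 0 := by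
  -- intermediate values of `cos ν + c sinc ν`, which is `1 + c > 0` at `0` and `-1` at `π`
  have hcont : Continuous fun ν => Real.cos ν + c * Real.sinc ν := by
    have := Real.continuous_sinc; fun_prop
  obtain ⟨ν, hν, hν0⟩ := intermediate_value_Ioo' Real.pi_pos.le hcont.continuousOn
    (show (0 : ℝ) ∈ Ioo _ _ from
      ⟨by simp [Real.sinc_of_ne_zero Real.pi_ne_zero], by simp; linarith⟩)
  refine ⟨ν, hν, ?_⟩
  simp only [Real.sinc_of_ne_zero hν.1.ne'] at hν0
  have hν_ne : ν ≠ 0 := hν.1.ne'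
  field_simp at hν0
  linear_combination hν0

theorem exists_pos_mul_cosh_add_mul_sinh_eq_zero {c : ℝ} (hc : c < -1) :
    ∃ η, 0 < η ∧ η * Real.cosh η + c * Real.sinh η = 0 := by
  have hnear : ∀ᶠ a in nhds (0 : ℝ), Real.cosh a < -c :=
    (Real.continuous_cosh.tendsto 0).eventually (gt_mem_nhds (by rw [Real.cosh_zero]; linarith))
  obtain ⟨a, ha, ha0⟩ := ((hnear.filter_mono nhdsWithin_le_nhds).and
    (self_mem_nhdsWithin (s := Ioi (0 : ℝ)))).exists
  set g : ℝ → ℝ := fun η => η * Real.cosh η + c * Real.sinh η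
  have hga : g a < 0 := by
    have := Real.self_le_sinh_iff.2 (le_of_lt ha0)
    simp only [g]; nlinarith
  have hgb : 0 < g (a - c) := by
    have := Real.sinh_lt_cosh (a - c)
    have := Real.cosh_pos (a - c)
    simp only [g]; nlinarith
  obtain ⟨η, hη, hη0⟩ :=
    intermediate_value_Ioo (by linarith) (by fun_prop : Continuous g).continuousOn
    (show (0 : ℝ) ∈ Ioo (g a) (g (a - c)) from ⟨hga, hgb⟩)
  exact ⟨η, (mem_Ioi.1 ha0).trans hη.1, hη0⟩

instance : IsProbabilityMeasure mu01 := ⟨by simp [mu01]⟩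

theorem ae_mem_Ioo_mu01 : ∀ᵐ x ∂mu01, x ∈ Ioo (0 : ℝ) 1 :=
  ae_restrict_mem measurableSet_Ioo

theorem mu01_restrict_Ioi {x : ℝ} (hx : 0 ≤ x) :
    mu01.restrict (Ioi x) = volume.restrict (Ioo x 1) := by
  rw [mu01, Measure.restrict_restrict measurableSet_Ioi, Ioi_inter_Ioo, max_eq_left hx]

theorem measurePreserving_one_sub_mu01 : MeasurePreserving (fun x : ℝ => 1 - x) mu01 mu01 := by
  have h := (volume.measurePreserving_sub_left (1 : ℝ)).restrict_preimage
    (measurableSet_Ioo (a := (0 : ℝ)) (b := 1))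
  rwa [preimage_const_sub_Ioo, sub_zero, sub_self] at h

noncomputable def resolventKernel (c x s : ℝ) : ℝ≥0∞ :=
  (Ioi x).indicator (fun s => ENNReal.ofReal (Real.exp (c * (x - s)))) s

theorem measurable_resolventKernel (c : ℝ) :
    Measurable (Function.uncurry (resolventKernel c)) :=
  Measurable.indicator (by fun_prop) (measurableSet_lt measurable_fst measurable_snd)

theorem resolventKernel_one_sub (c x s : ℝ) :
    resolventKernel c (1 - s) (1 - x) = resolventKernel c x s := by
  simp only [resolventKernel, indicator, mem_Ioi, sub_lt_sub_iff_left]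
  congr 3; ring

theorem lintegral_resolventKernel_mul_one_sub (c s : ℝ) {g : ℝ → ℝ≥0∞} (hg : Measurable g) :
    ∫⁻ x, resolventKernel c x s * g (1 - x) ∂mu01 =
      ∫⁻ u, resolventKernel c (1 - s) u * g u ∂mu01 := by
  have hmeas : Measurable fun u => resolventKernel c (1 - u) s * g u :=
    ((measurable_resolventKernel c).comp ((measurable_const.sub measurable_id).prodMk
      measurable_const)).mul hg
  calc ∫⁻ x, resolventKernel c x s * g (1 - x) ∂mu01
      = ∫⁻ x, resolventKernel c (1 - (1 - x)) s * g (1 - x) ∂mu01 := by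
        simp_rw [sub_sub_cancel]
    _ = ∫⁻ u, resolventKernel c (1 - u) s * g u ∂mu01 :=
        measurePreserving_one_sub_mu01.lintegral_comp hmeas
    _ = ∫⁻ u, resolventKernel c (1 - s) u * g u ∂mu01 := by
        simp_rw [← resolventKernel_one_sub c (1 - s), sub_sub_cancel]

theorem lintegral_resolventKernel_mul (c : ℝ) {x : ℝ} (hx : 0 ≤ x) (g : ℝ → ℝ≥0∞) :
    ∫⁻ s, resolventKernel c x s * g s ∂mu01 =
      ∫⁻ s in Ioo x 1, ENNReal.ofReal (Real.exp (c * (x - s))) * g s := by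
  simp only [resolventKernel, ← indicator_mul_left]
  rw [lintegral_indicator measurableSet_Ioi, mu01_restrict_Ioi hx]

theorem lintegral_resolventKernel_mul_ofReal (c : ℝ) {x : ℝ} (hx : x ∈ Ioo (0 : ℝ) 1) {φ : ℝ → ℝ}
    (hφ : Continuous φ) (hφ_nonneg : ∀ s ∈ Ioo (0 : ℝ) 1, 0 ≤ φ s) :
    ∫⁻ s, resolventKernel c x s * ENNReal.ofReal (φ s) ∂mu01 =
      ENNReal.ofReal (∫ s in Ioo x 1, Real.exp (c * (x - s)) * φ s) := by
  rw [lintegral_resolventKernel_mul c hx.1.le, ofReal_integral_eq_lintegral_ofReal]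
  · refine setLIntegral_congr_fun measurableSet_Ioo fun s _ => ?_
    rw [ENNReal.ofReal_mul (Real.exp_pos _).le]
  · exact ((by fun_prop : Continuous fun s => Real.exp (c * (x - s)) * φ s).integrableOn_Icc
      (a := x) (b := 1)).mono_set Ioo_subset_Icc_self
  · filter_upwards [ae_restrict_mem measurableSet_Ioo] with s hs
    exact mul_nonneg (Real.exp_pos _).le (hφ_nonneg s ⟨hx.1.trans hs.1, hs.2⟩)

namespace IsResolventFamily

variable {R : ℂ → (Lp ℂ 2 mu01 →L[ℂ] Lp ℂ 2 mu01)}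

theorem enorm_apply_le (hR : IsResolventFamily R) (z : ℂ) (f : Lp ℂ 2 mu01) :
    ∀ᵐ x ∂mu01, ‖R z f x‖ₑ ≤ ∫⁻ s, resolventKernel z.re x s * ‖f s‖ₑ ∂mu01 := by
  filter_upwards [hR z f, ae_mem_Ioo_mu01] with x hx hx01
  rw [hx, lintegral_resolventKernel_mul _ hx01.1.le]
  refine (enorm_integral_le_lintegral_enorm _).trans_eq (lintegral_congr fun s => ?_)
  rw [enorm_mul, ← ofReal_norm, Complex.norm_exp]
  simp

theorem norm_apply_le (hR : IsResolventFamily R) (z : ℂ) {φ : ℝ → ℝ} {κ : ℝ}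
    (hφ : Continuous φ) (hφ_pos : ∀ s ∈ Ioo (0 : ℝ) 1, 0 < φ s) (hκ : 0 ≤ κ)
    (hA : ∀ x ∈ Ioo (0 : ℝ) 1,
      ∫ s in Ioo x 1, Real.exp (z.re * (x - s)) * φ s = κ * φ (1 - x))
    (f : Lp ℂ 2 mu01) : ‖R z f‖ ≤ κ * ‖f‖ := by
  set p : ℝ → ℝ≥0∞ := fun s => ENNReal.ofReal (φ s)
  have hφ_nonneg : ∀ s ∈ Ioo (0 : ℝ) 1, 0 ≤ φ s := fun s hs => (hφ_pos s hs).le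
  have hKp : ∀ x ∈ Ioo (0 : ℝ) 1,
      ∫⁻ s, resolventKernel z.re x s * p s ∂mu01 = ENNReal.ofReal κ * p (1 - x) := by
    intro x hx
    rw [lintegral_resolventKernel_mul_ofReal _ hx hφ hφ_nonneg, hA x hx, ENNReal.ofReal_mul hκ]
  have hKq : ∀ s ∈ Ioo (0 : ℝ) 1,
      ∫⁻ x, resolventKernel z.re x s * p (1 - x) ∂mu01 = ENNReal.ofReal κ * p s := by
    intro s hs
    rw [lintegral_resolventKernel_mul_one_sub _ _ (by fun_prop),
      hKp _ ⟨by linarith [hs.2], by linarith [hs.1]⟩, sub_sub_cancel]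
  have hsq : eLpNorm (R z f) 2 mu01 ^ 2 ≤ (ENNReal.ofReal κ * eLpNorm f 2 mu01) ^ 2 :=
    calc eLpNorm (R z f) 2 mu01 ^ 2
        ≤ ∫⁻ x, (∫⁻ s, resolventKernel z.re x s * ‖f s‖ₑ ∂mu01) ^ 2 ∂mu01 := by
          rw [eLpNorm_two_sq]
          exact lintegral_mono_ae ((hR.enorm_apply_le z f).mono fun x hx => by gcongr)
      _ ≤ ENNReal.ofReal κ * ENNReal.ofReal κ * ∫⁻ s, ‖f s‖ₑ ^ 2 ∂mu01 :=
          lintegral_sq_lintegral_mul_le_of_schur (measurable_resolventKernel z.re)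
            (by fun_prop) (by fun_prop)
            (ae_mem_Ioo_mu01.mono fun s hs => ENNReal.ofReal_pos.2 (hφ_pos s hs) |>.ne')
            (ae_of_all _ fun _ => ENNReal.ofReal_ne_top)
            (ae_mem_Ioo_mu01.mono fun x hx => (hKp x hx).le)
            (ae_mem_Ioo_mu01.mono fun s hs => (hKq s hs).le)
            (Lp.aestronglyMeasurable f).enorm
      _ = (ENNReal.ofReal κ * eLpNorm f 2 mu01) ^ 2 := by rw [mul_pow, eLpNorm_two_sq, sq]
  rw [Lp.norm_def, Lp.norm_def, ← ENNReal.toReal_ofReal hκ, ← ENNReal.toReal_mul]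
  exact ENNReal.toReal_mono (by finiteness) ((ENNReal.pow_le_pow_left_iff two_ne_zero).1 hsq)

theorem apply_ae_eq_of_ae_eq_modulated (hR : IsResolventFamily R) (z : ℂ) {φ : ℝ → ℝ} {κ : ℝ}
    (hA : ∀ x ∈ Ioo (0 : ℝ) 1,
      ∫ s in Ioo x 1, Real.exp (z.re * (x - s)) * φ s = κ * φ (1 - x))
    {f : Lp ℂ 2 mu01}
    (hf : f =ᵐ[mu01] fun s => Complex.exp ((z.im * s : ℝ) * Complex.I) * φ s) :
    R z f =ᵐ[mu01]
      fun x => Complex.exp ((z.im * x : ℝ) * Complex.I) * ((κ * φ (1 - x) : ℝ) : ℂ) := by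
  filter_upwards [hR z f, ae_mem_Ioo_mu01] with x hx hx01
  have hf_Ioo : f =ᵐ[volume.restrict (Ioo x 1)]
      fun s => Complex.exp ((z.im * s : ℝ) * Complex.I) * φ s := by
    rw [← mu01_restrict_Ioi hx01.1.le]
    exact ae_restrict_of_ae hf
  have hmod (s : ℝ) : Complex.exp (z * (x - s)) * (Complex.exp ((z.im * s : ℝ) * Complex.I) * φ s) =
      Complex.exp ((z.im * x : ℝ) * Complex.I) * ((Real.exp (z.re * (x - s)) * φ s : ℝ) : ℂ) := by
    have hexp : z * (x - s) + (z.im * s : ℝ) * Complex.I =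
        (z.re * (x - s) : ℝ) + (z.im * x : ℝ) * Complex.I := by
      apply Complex.ext
      · simp
      · simp; ring
    rw [← mul_assoc, ← Complex.exp_add, hexp, Complex.exp_add]
    push_cast
    ring
  rw [hx, integral_congr_ae (hf_Ioo.mono fun s hs => by rw [hs, hmod]), integral_const_mul,
    integral_complex_ofReal, hA x hx01]

theorem le_opNorm (hR : IsResolventFamily R) (z : ℂ) {φ : ℝ → ℝ} {κ : ℝ}
    (hφ : Continuous φ) (hφ_pos : ∀ s ∈ Ioo (0 : ℝ) 1, 0 < φ s)
    (hA : ∀ x ∈ Ioo (0 : ℝ) 1,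
      ∫ s in Ioo x 1, Real.exp (z.re * (x - s)) * φ s = κ * φ (1 - x)) :
    κ ≤ ‖R z‖ := by
  set f₀ : ℝ → ℂ := fun s => Complex.exp ((z.im * s : ℝ) * Complex.I) * φ s
  have hnorm (t r : ℝ) : ‖Complex.exp ((t : ℂ) * Complex.I) * (r : ℂ)‖ = ‖r‖ := by
    simp [Complex.norm_exp_ofReal_mul_I]
  obtain ⟨C, hC⟩ :=
    (isCompact_Icc (a := (0 : ℝ)) (b := 1)).exists_bound_of_continuousOn hφ.continuousOn
  have hf₀ : MemLp f₀ 2 mu01 := by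
    refine MemLp.of_bound (by fun_prop : Continuous f₀).aestronglyMeasurable C ?_
    filter_upwards [ae_mem_Ioo_mu01] with s hs
    rw [hnorm]
    exact hC s (Ioo_subset_Icc_self hs)
  set f := hf₀.toLp f₀
  have hRf := hR.apply_ae_eq_of_ae_eq_modulated z hA hf₀.coeFn_toLp
  have hf_eLp : eLpNorm f 2 mu01 = eLpNorm φ 2 mu01 :=
    eLpNorm_congr_norm_ae (hf₀.coeFn_toLp.mono fun x hx => by rw [hx]; exact hnorm _ _)
  have hφ_eLp_ne : eLpNorm φ 2 mu01 ≠ 0 := by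
    rw [Ne, eLpNorm_eq_zero_iff hφ.aestronglyMeasurable two_ne_zero]
    intro hφ_zero
    obtain ⟨s, hs, hs01⟩ := (hφ_zero.and ae_mem_Ioo_mu01).exists
    exact (hφ_pos s hs01).ne' hs
  have hRf_eLp : eLpNorm (R z f) 2 mu01 = ‖κ‖ₑ * eLpNorm φ 2 mu01 := calc
    eLpNorm (R z f) 2 mu01 = eLpNorm (κ • (φ ∘ fun x => 1 - x)) 2 mu01 :=
      eLpNorm_congr_norm_ae (hRf.mono fun x hx => by rw [hx, hnorm]; rfl)
    _ = ‖κ‖ₑ * eLpNorm φ 2 mu01 := by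
      rw [eLpNorm_const_smul, eLpNorm_comp_measurePreserving hφ.aestronglyMeasurable
        measurePreserving_one_sub_mu01]
  have hf_pos : 0 < ‖f‖ := by
    rw [Lp.norm_def, hf_eLp]
    exact ENNReal.toReal_pos hφ_eLp_ne (hf_eLp ▸ Lp.eLpNorm_ne_top f)
  calc κ ≤ |κ| := le_abs_self κ
    _ = ‖R z f‖ / ‖f‖ := by
      rw [Lp.norm_def, hRf_eLp, ENNReal.toReal_mul, toReal_enorm, Real.norm_eq_abs, ← hf_eLp,
        ← Lp.norm_def, mul_div_cancel_right₀ _ hf_pos.ne']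
    _ ≤ ‖R z‖ := (R z).ratio_le_opNorm f

theorem norm_eq (hR : IsResolventFamily R) (z : ℂ) {φ : ℝ → ℝ} {κ : ℝ}
    (hφ : Continuous φ) (hφ_pos : ∀ s ∈ Ioo (0 : ℝ) 1, 0 < φ s) (hκ : 0 ≤ κ)
    (hA : ∀ x ∈ Ioo (0 : ℝ) 1, ∫ s in x..1, Real.exp (z.re * (x - s)) * φ s = κ * φ (1 - x)) :
    ‖R z‖ = κ := by
  have hA' : ∀ x ∈ Ioo (0 : ℝ) 1,
      ∫ s in Ioo x 1, Real.exp (z.re * (x - s)) * φ s = κ * φ (1 - x) := fun x hx => by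
    rw [← integral_Ioc_eq_integral_Ioo, ← intervalIntegral.integral_of_le hx.2.le, hA x hx]
  exact le_antisymm ((R z).opNorm_le_bound hκ (hR.norm_apply_le z hφ hφ_pos hκ hA'))
    (hR.le_opNorm z hφ hφ_pos hA')

theorem norm_eq_sin_div (hR : IsResolventFamily R) {z : ℂ} {ν : ℝ}
    (hν : ν ∈ Ioo 0 Real.pi) (hrel : ν * Real.cos ν + z.re * Real.sin ν = 0) :
    ‖R z‖ = Real.sin ν / ν := by
  have hsin : 0 < Real.sin ν := Real.sin_pos_of_pos_of_lt_pi hν.1 hν.2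
  refine hR.norm_eq z (by fun_prop) (fun s hs => ?_) (div_pos hsin hν.1).le
    (fun x _ => integral_exp_mul_sin_eq hν hrel x)
  exact Real.sin_pos_of_pos_of_lt_pi (mul_pos hν.1 hs.1)
    ((mul_lt_of_lt_one_right hν.1 hs.2).trans hν.2)

theorem norm_eq_one (hR : IsResolventFamily R) {z : ℂ} (hz : z.re = -1) :
    ‖R z‖ = 1 :=
  hR.norm_eq z continuous_id (fun _ hs => hs.1) zero_le_one
    (fun x _ => hz ▸ integral_exp_neg_mul_eq x)

theorem norm_eq_sinh_div (hR : IsResolventFamily R) {z : ℂ} {η : ℝ}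
    (hη : 0 < η) (hrel : η * Real.cosh η + z.re * Real.sinh η = 0) :
    ‖R z‖ = Real.sinh η / η :=
  hR.norm_eq z (by fun_prop) (fun _ hs => Real.sinh_pos_iff.2 (mul_pos hη hs.1))
    (div_pos (Real.sinh_pos_iff.2 hη) hη).le (fun x _ => integral_exp_mul_sinh_eq hη hrel x)

theorem norm_eq_of_re_eq (hR : IsResolventFamily R) {z z' : ℂ}
    (h : z.re = z'.re) : ‖R z‖ = ‖R z'‖ := by
  rcases lt_trichotomy z.re (-1) with hlt | heq | hgt
  · obtain ⟨η, hη, hrel⟩ := exists_pos_mul_cosh_add_mul_sinh_eq_zero hlt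
    rw [hR.norm_eq_sinh_div hη hrel, hR.norm_eq_sinh_div hη (h ▸ hrel)]
  · rw [hR.norm_eq_one heq, hR.norm_eq_one (h ▸ heq)]
  · obtain ⟨ν, hν, hrel⟩ := exists_mem_Ioo_mul_cos_add_mul_sin_eq_zero hgt
    rw [hR.norm_eq_sin_div hν hrel, hR.norm_eq_sin_div hν (h ▸ hrel)]

end IsResolventFamily

theorem statement12 (R : ℂ → (Lp ℂ 2 mu01 →L[ℂ] Lp ℂ 2 mu01))
    (hR : IsResolventFamily R) :
    (∀ z z' : ℂ, z.re = z'.re → ‖R z‖ = ‖R z'‖) ∧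
    (∀ z : ℂ, -1 < z.re → ∀ ν : ℝ, ν ∈ Ioo 0 Real.pi →
      -(ν * (Real.cos ν / Real.sin ν)) = z.re →
      ‖R z‖ = Real.sin ν / ν ∧ ‖R z‖ = 1 / Real.sqrt (z.re ^ 2 + ν ^ 2)) ∧
    (∀ z : ℂ, z.re = -1 → ‖R z‖ = 1) ∧
    (∀ z : ℂ, z.re < -1 → ∀ η : ℝ, 0 < η →
      -(η * (Real.cosh η / Real.sinh η)) = z.re →
      ‖R z‖ = Real.sinh η / η ∧ ‖R z‖ = 1 / Real.sqrt (z.re ^ 2 - η ^ 2)) := by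
  refine ⟨fun z z' h => hR.norm_eq_of_re_eq h, fun z _ ν hν hcot => ?_,
    fun z hz => hR.norm_eq_one hz, fun z _ η hη hcoth => ?_⟩
  · have hsin : 0 < Real.sin ν := Real.sin_pos_of_pos_of_lt_pi hν.1 hν.2
    have hrel : ν * Real.cos ν + z.re * Real.sin ν = 0 := by
      rw [← hcot]; field_simp [hsin.ne']; ring
    rw [hR.norm_eq_sin_div hν hrel, sq_add_sq_eq_of_mul_cos_add_mul_sin_eq_zero hsin.ne' hrel,
      Real.sqrt_sq (div_pos hν.1 hsin).le, one_div_div]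
    exact ⟨rfl, rfl⟩
  · have hsinh : 0 < Real.sinh η := Real.sinh_pos_iff.2 hη
    have hrel : η * Real.cosh η + z.re * Real.sinh η = 0 := by
      rw [← hcoth]; field_simp [hsinh.ne']; ring
    rw [hR.norm_eq_sinh_div hη hrel, sq_sub_sq_eq_of_mul_cosh_add_mul_sinh_eq_zero hη.ne' hrel,
      Real.sqrt_sq (div_pos hη hsinh).le, one_div_div]
    exact ⟨rfl, rfl⟩
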